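/- arXiv:1603.07221 — 3 statements merged into one kernel-verified Lean document; each statement's English description precedes it below -/
import Mathlib

section
/- Let ρ⁰ : ι → ℝ be a finite family with 0 < ρ_min ≤ ρ⁰_K ≤ ρ_max, and suppose ρ : ι → ℝ, volumes |K| > 0, and fluxes F_{K,σ} with upwind face densities ρ_σ ∈ {ρ_K, ρ_L} (taking the value from the cell K when u_σ·n_{K,σ} ≥ 0) satisfy, for each K: (|K|/δt)(ρ_K − ρ⁰_K) + ∑_{σ∈E(K)} |σ| ρ_σ (u_σ·n_{K,σ}) = 0, together with the discrete divergence-free condition ∑_{σ∈E(K)} |σ| (u_σ·n_{K,σ}) = 0 for each K. Then ρ_min ≤ ρ_K ≤ ρ_max for all K. -/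
/-- Discrete maximum principle for the implicit upwind finite volume discretization of the
mass balance with discretely divergence-free velocity: `ι` indexes the cells, `E K` the faces
of cell `K`, `w K σ` is `u_σ·n_{K,σ}`, the face density `ρf σ` is upwind (it equals `ρ K`
when `w K σ ≥ 0`, and equals some cell value `ρ L` otherwise); if each cell satisfies
`(|K|/δt)(ρ_K − ρ⁰_K) + ∑_{σ∈E(K)} |σ| ρ_σ (u_σ·n_{K,σ}) = 0` and
`∑_{σ∈E(K)} |σ| (u_σ·n_{K,σ}) = 0`, then `ρ_min ≤ ρ_K ≤ ρ_max` for all `K`. -/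
theorem stmt_10 {ι Λ : Type*} [Fintype ι] [Nonempty ι] (E : ι → Finset Λ)
    (vol : ι → ℝ) (hvol : ∀ K, 0 < vol K) (area : Λ → ℝ) (harea : ∀ σ, 0 < area σ)
    (δt : ℝ) (hδt : 0 < δt) (ρmin ρmax : ℝ) (hρmin : 0 < ρmin)
    (ρ0 ρ : ι → ℝ) (h0 : ∀ K, ρmin ≤ ρ0 K ∧ ρ0 K ≤ ρmax)
    (w : ι → Λ → ℝ) (ρf : Λ → ℝ)
    (hupwind : ∀ K, ∀ σ ∈ E K,
      (0 ≤ w K σ → ρf σ = ρ K) ∧ (w K σ < 0 → ∃ L, ρf σ = ρ L))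
    (hmass : ∀ K,
      vol K / δt * (ρ K - ρ0 K) + ∑ σ ∈ E K, area σ * ρf σ * w K σ = 0)
    (hdiv : ∀ K, ∑ σ ∈ E K, area σ * w K σ = 0) :
    ∀ K, ρmin ≤ ρ K ∧ ρ K ≤ ρmax := by
  have key : ∀ K, vol K / δt * (ρ K - ρ0 K)
      = ∑ σ ∈ E K, area σ * (ρ K - ρf σ) * w K σ := by
    intro K
    have h1 : ∑ σ ∈ E K, area σ * (ρ K - ρf σ) * w K σ
        = ρ K * (∑ σ ∈ E K, area σ * w K σ) - ∑ σ ∈ E K, area σ * ρf σ * w K σ := by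
      rw [Finset.mul_sum, ← Finset.sum_sub_distrib]
      exact Finset.sum_congr rfl fun σ _ => by ring
    rw [h1, hdiv K]
    have := hmass K
    linarith
  have hpos : ∀ K, 0 < vol K / δt := fun K => div_pos (hvol K) hδt
  -- maximum
  obtain ⟨Kmax, hKmax⟩ := Finite.exists_max ρ
  obtain ⟨Kmin, hKmin⟩ := Finite.exists_min ρ
  have hmaxle : ρ Kmax ≤ ρ0 Kmax := by
    have hsum : ∑ σ ∈ E Kmax, area σ * (ρ Kmax - ρf σ) * w Kmax σ ≤ 0 := by
      apply Finset.sum_nonpos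
      intro σ hσ
      rcases le_or_gt 0 (w Kmax σ) with hw | hw
      · rw [(hupwind Kmax σ hσ).1 hw]
        simp
      · obtain ⟨L, hL⟩ := (hupwind Kmax σ hσ).2 hw
        have : ρf σ ≤ ρ Kmax := hL ▸ hKmax L
        exact mul_nonpos_of_nonneg_of_nonpos
          (mul_nonneg (harea σ).le (by linarith)) hw.le
    have := key Kmax
    nlinarith [hpos Kmax]
  have hminge : ρ0 Kmin ≤ ρ Kmin := by
    have hsum : 0 ≤ ∑ σ ∈ E Kmin, area σ * (ρ Kmin - ρf σ) * w Kmin σ := by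
      apply Finset.sum_nonneg
      intro σ hσ
      rcases le_or_gt 0 (w Kmin σ) with hw | hw
      · rw [(hupwind Kmin σ hσ).1 hw]
        simp
      · obtain ⟨L, hL⟩ := (hupwind Kmin σ hσ).2 hw
        have : ρ Kmin ≤ ρf σ := hL ▸ hKmin L
        have h1 : area σ * (ρ Kmin - ρf σ) ≤ 0 :=
          mul_nonpos_of_nonneg_of_nonpos (harea σ).le (by linarith)
        exact mul_nonneg_of_nonpos_of_nonpos h1 hw.le
    have := key Kmin
    nlinarith [hpos Kmin]
  intro K
  exact ⟨le_trans (le_trans (h0 Kmin).1 hminge) (hKmin K),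
    le_trans (hKmax K) (le_trans hmaxle (h0 Kmax).2)⟩
end

section
/- Let (ρ_K^n) be a solution of the implicit upwind finite-volume mass balance with divergence-free velocity: (|K|/δt)(ρ_K^n − ρ_K^{n−1}) + ∑_{σ∈E(K)} |σ| ρ_σ^n (u_σ^n·n_{K,σ}) = 0 with ∑_{σ∈E(K)} |σ| u_σ^n·n_{K,σ} = 0, where ρ_σ^n is upwind. Then for each cell K: (|K|/(2δt))((ρ_K^n)² − (ρ_K^{n−1})²) + (1/2)∑_{σ∈E(K)} |σ| (ρ_σ^n)² (u_σ^n·n_{K,σ}) + R_K^n = 0, where R_K^n = (|K|/(2δt))(ρ_K^n − ρ_K^{n−1})² − (1/2)∑_{σ∈E(K)} |σ| (ρ_σ^n − ρ_K^n)² (u_σ^n·n_{K,σ}) is nonnegative. -/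
/-- Discrete renormalization identity for `ρ²/2` on a cell `K` of the implicit upwind scheme:
if `(|K|/δt)(ρ_K − ρ⁰_K) + ∑_{σ∈E(K)} |σ| ρ_σ w_σ = 0` with `∑_{σ∈E(K)} |σ| w_σ = 0`
and the upwind choice (`ρ_σ = ρ_K` when `w_σ ≥ 0`), then
`(|K|/(2δt))(ρ_K² − (ρ⁰_K)²) + (1/2)∑ |σ| ρ_σ² w_σ + R_K = 0`, with
`R_K = (|K|/(2δt))(ρ_K − ρ⁰_K)² − (1/2)∑ |σ| (ρ_σ − ρ_K)² w_σ ≥ 0`. -/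
theorem stmt_11 {Λ : Type*} (E : Finset Λ) (volK δt : ℝ) (hvol : 0 < volK)
    (hδt : 0 < δt) (ρK ρK0 : ℝ) (ρf w area : Λ → ℝ)
    (harea : ∀ σ ∈ E, 0 ≤ area σ)
    (hupwind : ∀ σ ∈ E, 0 ≤ w σ → ρf σ = ρK)
    (hmass : volK / δt * (ρK - ρK0) + ∑ σ ∈ E, area σ * ρf σ * w σ = 0)
    (hdiv : ∑ σ ∈ E, area σ * w σ = 0)
    (R : ℝ)
    (hR : R = volK / (2 * δt) * (ρK - ρK0) ^ 2
      - (1 / 2) * ∑ σ ∈ E, area σ * (ρf σ - ρK) ^ 2 * w σ) :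
    volK / (2 * δt) * (ρK ^ 2 - ρK0 ^ 2)
      + (1 / 2) * ∑ σ ∈ E, area σ * (ρf σ) ^ 2 * w σ + R = 0 ∧ 0 ≤ R := by
  have hsum : ∑ σ ∈ E, area σ * (ρf σ) ^ 2 * w σ
      = (∑ σ ∈ E, area σ * (ρf σ - ρK) ^ 2 * w σ)
        + 2 * ρK * (∑ σ ∈ E, area σ * ρf σ * w σ)
        - ρK ^ 2 * (∑ σ ∈ E, area σ * w σ) := by
    rw [Finset.mul_sum, Finset.mul_sum, ← Finset.sum_add_distrib,
      ← Finset.sum_sub_distrib]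
    exact Finset.sum_congr rfl fun σ _ => by ring
  have hδt' : δt ≠ 0 := ne_of_gt hδt
  constructor
  · subst hR
    rw [hsum]
    linear_combination ρK * hmass - ρK ^ 2 / 2 * hdiv
  · have hle : ∑ σ ∈ E, area σ * (ρf σ - ρK) ^ 2 * w σ ≤ 0 := by
      apply Finset.sum_nonpos
      intro σ hσ
      rcases le_or_gt 0 (w σ) with h | h
      · rw [hupwind σ hσ h]; simp
      · exact mul_nonpos_of_nonneg_of_nonpos
          (mul_nonneg (harea σ hσ) (sq_nonneg _)) h.le
    subst hR
    have : 0 ≤ volK / (2 * δt) * (ρK - ρK0) ^ 2 := by positivity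
    linarith
end

section
/- Summing the discrete ρ² identity over all cells and all time steps with conservative fluxes yields: (1/2)∑_K |K|(ρ_K^N)² + ∑_{n=1}^N (δt/2) ∑_{σ=K|L internal} |σ| (ρ_L^n − ρ_K^n)² |u_σ^n·n_{K,σ}| + (1/2)∑_{n=1}^N ∑_K |K|(ρ_K^n − ρ_K^{n−1})² = (1/2)∑_K |K| (ρ_K^0)². In particular ∑_{n=1}^N δt ∑_{σ=K|L} |σ| (ρ_L^n − ρ_K^n)² |u_σ^n·n_{K,σ}| ≤ ∑_K |K| (ρ_K^0)². -/
/-- Global weak-BV estimate on the density for the implicit upwind scheme. The internal faces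
are indexed by `Φ`, face `σ` separating the cells `c1 σ` and `c2 σ`, with `w n σ` the normal
velocity `u_σⁿ·n_{c1 σ,σ}` (conservativity is built in: the flux seen from `c2 σ` is the
opposite).  If for every `1 ≤ n ≤ N` and every cell the upwind mass balance and the discrete
divergence-free constraint hold, then
`(1/2)∑_K |K|(ρ_K^N)² + ∑_{n=1}^N (δt/2)∑_σ |σ|(ρ_{c2}ⁿ − ρ_{c1}ⁿ)²|w_σⁿ|`
`+ (1/2)∑_{n=1}^N ∑_K |K|(ρ_Kⁿ − ρ_K^{n−1})² = (1/2)∑_K |K|(ρ_K⁰)²`,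
and in particular `∑_{n=1}^N δt ∑_σ |σ|(ρ_{c2}ⁿ − ρ_{c1}ⁿ)²|w_σⁿ| ≤ ∑_K |K|(ρ_K⁰)²`. -/
theorem stmt_12 {ι Φ : Type*} [Fintype ι] [Fintype Φ] [DecidableEq ι]
    (N : ℕ) (hN : 1 ≤ N) (δt : ℝ) (hδt : 0 < δt)
    (vol : ι → ℝ) (hvol : ∀ K, 0 < vol K) (area : Φ → ℝ) (harea : ∀ σ, 0 ≤ area σ)
    (c1 c2 : Φ → ι) (ρ : ℕ → ι → ℝ) (w : ℕ → Φ → ℝ) (ρup : ℕ → Φ → ℝ)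
    (hup : ∀ n σ, ρup n σ = if 0 ≤ w n σ then ρ n (c1 σ) else ρ n (c2 σ))
    (hmass : ∀ n, 1 ≤ n → n ≤ N → ∀ K,
      vol K / δt * (ρ n K - ρ (n - 1) K) +
        ∑ σ : Φ, area σ * ρup n σ * w n σ *
          ((if c1 σ = K then (1 : ℝ) else 0) - (if c2 σ = K then (1 : ℝ) else 0)) = 0)
    (hdiv : ∀ n, 1 ≤ n → n ≤ N → ∀ K,
      ∑ σ : Φ, area σ * w n σ *
        ((if c1 σ = K then (1 : ℝ) else 0) - (if c2 σ = K then (1 : ℝ) else 0)) = 0) :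
    ((1 : ℝ) / 2) * (∑ K : ι, vol K * (ρ N K) ^ 2)
      + (∑ n ∈ Finset.Icc 1 N, (δt / 2) *
          ∑ σ : Φ, area σ * (ρ n (c2 σ) - ρ n (c1 σ)) ^ 2 * |w n σ|)
      + ((1 : ℝ) / 2) * (∑ n ∈ Finset.Icc 1 N, ∑ K : ι, vol K * (ρ n K - ρ (n - 1) K) ^ 2)
      = ((1 : ℝ) / 2) * (∑ K : ι, vol K * (ρ 0 K) ^ 2)
    ∧ (∑ n ∈ Finset.Icc 1 N, δt *
          ∑ σ : Φ, area σ * (ρ n (c2 σ) - ρ n (c1 σ)) ^ 2 * |w n σ|)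
        ≤ ∑ K : ι, vol K * (ρ 0 K) ^ 2 := by
  classical
  -- abbreviations (definitional)
  let S : ℕ → ℝ := fun n => ∑ K : ι, vol K * (ρ n K) ^ 2
  let B : ℕ → ℝ := fun n => ∑ σ : Φ, area σ * (ρ n (c2 σ) - ρ n (c1 σ)) ^ 2 * |w n σ|
  let D : ℕ → ℝ := fun n => ∑ K : ι, vol K * (ρ n K - ρ (n - 1) K) ^ 2
  -- collapse lemma
  have col : ∀ (f : Φ → ℝ) (g : ι → ℝ),
      ∑ K : ι, (∑ σ : Φ, f σ *
          ((if c1 σ = K then (1 : ℝ) else 0) - (if c2 σ = K then (1 : ℝ) else 0))) * g K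
        = ∑ σ : Φ, f σ * (g (c1 σ) - g (c2 σ)) := by
    intro f g
    simp only [Finset.sum_mul]
    rw [Finset.sum_comm]
    refine Finset.sum_congr rfl fun σ _ => ?_
    have : ∀ K : ι, f σ *
        ((if c1 σ = K then (1 : ℝ) else 0) - (if c2 σ = K then (1 : ℝ) else 0)) * g K
        = (if c1 σ = K then f σ * g K else 0) - (if c2 σ = K then f σ * g K else 0) := by
      intro K; split_ifs <;> ring
    rw [Finset.sum_congr rfl fun K _ => this K, Finset.sum_sub_distrib,
      Finset.sum_ite_eq, Finset.sum_ite_eq]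
    simp only [Finset.mem_univ, if_true]
    ring
  -- per-step energy identity
  have step : ∀ n, 1 ≤ n → n ≤ N →
      (1/2 : ℝ) * S n + (δt/2) * B n + (1/2 : ℝ) * D n = (1/2 : ℝ) * S (n-1) := by
    intro n hn1 hn2
    have E1 : ∑ K : ι, (vol K / δt * (ρ n K - ρ (n - 1) K)) * ρ n K
        + ∑ σ : Φ, (area σ * ρup n σ * w n σ) * (ρ n (c1 σ) - ρ n (c2 σ)) = 0 := by
      have h0 : ∑ K : ι, (vol K / δt * (ρ n K - ρ (n - 1) K) +
          ∑ σ : Φ, area σ * ρup n σ * w n σ *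
            ((if c1 σ = K then (1 : ℝ) else 0) - (if c2 σ = K then (1 : ℝ) else 0))) * ρ n K
          = 0 :=
        Finset.sum_eq_zero fun K _ => by rw [hmass n hn1 hn2 K, zero_mul]
      rw [Finset.sum_congr rfl (fun K (_ : K ∈ Finset.univ) => add_mul _ _ (ρ n K)),
        Finset.sum_add_distrib] at h0
      rwa [col (fun σ => area σ * ρup n σ * w n σ) (fun K => ρ n K)] at h0
    have E2 : ∑ σ : Φ, (area σ * w n σ) * ((ρ n (c1 σ))^2/2 - (ρ n (c2 σ))^2/2) = 0 := by
      have h0 : ∑ K : ι, (∑ σ : Φ, area σ * w n σ *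
          ((if c1 σ = K then (1 : ℝ) else 0) - (if c2 σ = K then (1 : ℝ) else 0)))
            * ((ρ n K)^2/2) = 0 :=
        Finset.sum_eq_zero fun K _ => by rw [hdiv n hn1 hn2 K, zero_mul]
      rwa [col (fun σ => area σ * w n σ) (fun K => (ρ n K)^2/2)] at h0
    have key : ∑ σ : Φ, (area σ * ρup n σ * w n σ) * (ρ n (c1 σ) - ρ n (c2 σ))
        = ∑ σ : Φ, (area σ * w n σ) * ((ρ n (c1 σ))^2/2 - (ρ n (c2 σ))^2/2)
          + (1/2 : ℝ) * B n := by
      show _ = _ + (1/2 : ℝ) * ∑ σ : Φ, area σ * (ρ n (c2 σ) - ρ n (c1 σ)) ^ 2 * |w n σ|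
      rw [Finset.mul_sum, ← Finset.sum_add_distrib]
      refine Finset.sum_congr rfl fun σ _ => ?_
      rw [hup n σ]
      rcases le_or_gt 0 (w n σ) with h | h
      · rw [if_pos h, abs_of_nonneg h]; ring
      · rw [if_neg (not_le.mpr h), abs_of_neg h]; ring
    have sumK : δt * ∑ K : ι, (vol K / δt * (ρ n K - ρ (n - 1) K)) * ρ n K
        = (1/2 : ℝ) * S n - (1/2 : ℝ) * S (n-1) + (1/2 : ℝ) * D n := by
      show δt * _ = (1/2 : ℝ) * ∑ K : ι, vol K * (ρ n K) ^ 2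
        - (1/2 : ℝ) * ∑ K : ι, vol K * (ρ (n-1) K) ^ 2
        + (1/2 : ℝ) * ∑ K : ι, vol K * (ρ n K - ρ (n - 1) K) ^ 2
      rw [Finset.mul_sum]
      simp only [Finset.mul_sum, ← Finset.sum_sub_distrib, ← Finset.sum_add_distrib]
      refine Finset.sum_congr rfl fun K _ => ?_
      field_simp
      ring
    linear_combination (-1 : ℝ) * sumK + δt * E1 - δt * key - δt * E2
  -- telescoping
  have tele : ∑ n ∈ Finset.Icc 1 N, ((δt/2) * B n + (1/2 : ℝ) * D n)
      = (1/2 : ℝ) * S 0 - (1/2 : ℝ) * S N := by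
    have h1 : ∀ n ∈ Finset.Icc 1 N, (δt/2) * B n + (1/2 : ℝ) * D n
        = (1/2 : ℝ) * S (n-1) - (1/2 : ℝ) * S n := by
      intro n hn
      rw [Finset.mem_Icc] at hn
      have := step n hn.1 hn.2
      linarith
    rw [Finset.sum_congr rfl h1]
    have teleG : ∀ (f : ℕ → ℝ) (M : ℕ),
        ∑ x ∈ Finset.Icc 1 M, (f (x-1) - f x) = f 0 - f M := by
      intro f M
      induction M with
      | zero => simp
      | succ m ih =>
        rw [Finset.sum_Icc_succ_top (by omega : 1 ≤ m + 1), ih, Nat.add_sub_cancel]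
        ring
    exact teleG (fun j => (1/2 : ℝ) * S j) N
  have hBsplit : ∑ n ∈ Finset.Icc 1 N, ((δt/2) * B n + (1/2 : ℝ) * D n)
      = (∑ n ∈ Finset.Icc 1 N, (δt/2) * B n) + (1/2 : ℝ) * ∑ n ∈ Finset.Icc 1 N, D n := by
    rw [Finset.sum_add_distrib, Finset.mul_sum]
  have main : (1/2 : ℝ) * S N + (∑ n ∈ Finset.Icc 1 N, (δt/2) * B n)
      + (1/2 : ℝ) * ∑ n ∈ Finset.Icc 1 N, D n = (1/2 : ℝ) * S 0 := by
    rw [hBsplit] at tele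
    linarith [tele]
  constructor
  · exact main
  · have hSN : 0 ≤ S N :=
      Finset.sum_nonneg fun K _ => mul_nonneg (hvol K).le (sq_nonneg _)
    have hD : 0 ≤ ∑ n ∈ Finset.Icc 1 N, D n :=
      Finset.sum_nonneg fun n _ =>
        Finset.sum_nonneg fun K _ => mul_nonneg (hvol K).le (sq_nonneg _)
    have h2 : (∑ n ∈ Finset.Icc 1 N, δt * B n)
        = 2 * ∑ n ∈ Finset.Icc 1 N, (δt/2) * B n := by
      rw [Finset.mul_sum]; exact Finset.sum_congr rfl fun n _ => by ring
    show (∑ n ∈ Finset.Icc 1 N, δt * B n) ≤ S 0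
    rw [h2]
    linarith [main]
end
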